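/- arXiv:cs/0701082 — 2 statements merged into one kernel-verified Lean document; each statement's English description precedes it below -/
import Mathlib

section
/- If a ground program G is recurrent with respect to some level mapping |·| : Atom → ℝ and some ε > 0, then there is no infinite sequence A₀, A₁, A₂, … of atoms such that for each k there exists (Aₖ, Bs) ∈ G with A_{k+1} ∈ Bs. (Recurrence implies termination of ground derivations.) -/
/-! A recurrent program strictly lowers the level by at least `ε` along every derivation step,
so along an infinite derivation the levels drop below every bound, contradicting `|A| ≥ 0`. -/

section DescentByEpsilon

variable {α : Type*} [AddCommGroup α] {f : ℕ → α} {ε : α}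

theorem add_nsmul_le_of_add_le_pred [PartialOrder α] [IsOrderedAddMonoid α]
    (h : ∀ k, f (k + 1) + ε ≤ f k) (k : ℕ) : f k + k • ε ≤ f 0 := by
  induction k with
  | zero => simp
  | succ k ih =>
    calc f (k + 1) + (k + 1) • ε = (f (k + 1) + ε) + k • ε := by rw [succ_nsmul']; abel
      _ ≤ f k + k • ε := by gcongr; exact h k
      _ ≤ f 0 := ih

theorem not_bddBelow_range_of_add_le_pred [LinearOrder α] [IsOrderedAddMonoid α] [Archimedean α]
    (hε : 0 < ε) (h : ∀ k, f (k + 1) + ε ≤ f k) : ¬ BddBelow (Set.range f) := by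
  rintro ⟨b, hb⟩
  obtain ⟨n, hn⟩ := Archimedean.arch (f 0 - b) hε
  have hdesc := add_nsmul_le_of_add_le_pred h (n + 1)
  have hbn : b ≤ f (n + 1) := hb ⟨n + 1, rfl⟩
  have : (n + 1) • ε ≤ n • ε :=
    calc (n + 1) • ε ≤ f 0 - f (n + 1) := le_sub_iff_add_le'.mpr hdesc
      _ ≤ f 0 - b := sub_le_sub_left hbn _
      _ ≤ n • ε := hn
  exact (nsmul_lt_nsmul_left hε n.lt_succ_self).not_ge this

end DescentByEpsilon

theorem stmt_1 {Atom : Type*} (G : Set (Atom × List Atom)) (lvl : Atom → ℝ)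
    (ε : ℝ) (hε : ε > 0)
    (hrec : ∀ p ∈ G, lvl p.1 ≥ 0 ∧ ∀ B ∈ p.2, lvl B ≥ 0 ∧ lvl p.1 ≥ lvl B + ε) :
    ¬ ∃ A : ℕ → Atom, ∀ k, ∃ Bs, (A k, Bs) ∈ G ∧ A (k+1) ∈ Bs := by
  rintro ⟨A, hA⟩
  choose Bs hG hmem using hA
  have hstep (k : ℕ) : lvl (A (k + 1)) + ε ≤ lvl (A k) := ((hrec _ (hG k)).2 _ (hmem k)).2
  have hnonneg : BddBelow (Set.range (lvl ∘ A)) :=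
    ⟨0, by rintro _ ⟨k, rfl⟩; exact (hrec _ (hG k)).1⟩
  exact not_bddBelow_range_of_add_le_pred hε hstep hnonneg
end

section
/- Soundness of the full decision procedure for a single binary rule: let c be a linear constraint system A x̃ ≥ b over ℝ on variables x̃ = (x₀, x_{p,1},…,x_{p,n_p}, x_{q,1},…,x_{q,n_q}) including x₀ = 1, and suppose there exist nonnegative dual vectors y and z with Aᵀy = μ̃, bᵀy ≥ 1, Aᵀz = μ̃′, bᵀz ≥ 0, where μ̃ = (μ_{p,0} − μ_{q,0}, μ_{p,1},…,μ_{p,n_p}, −μ_{q,1},…,−μ_{q,n_q}) and μ̃′ = (μ_{q,0}, 0,…,0, μ_{q,1},…,μ_{q,n_q}). Then for every solution x̃ of the constraint system, the affine level mapping values satisfy |p| = μ_{p,0} + Σ μ_{p,i} x_{p,i} ≥ 1 + |q| and |q| = μ_{q,0} + Σ μ_{q,i} x_{q,i} ≥ 0. -/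
open Matrix in
lemma dual_bound {m n : ℕ} (A : Matrix (Fin m) (Fin n) ℝ) (b : Fin m → ℝ)
    (x : Fin n → ℝ) (hx : ∀ i, A.mulVec x i ≥ b i)
    (w : Fin m → ℝ) (hw : ∀ i, w i ≥ 0) (mu : Fin n → ℝ)
    (hAw : A.transpose.mulVec w = mu) :
    Finset.univ.sum (fun i => b i * w i) ≤ Finset.univ.sum (fun j => mu j * x j) := by
  have h1 : Finset.univ.sum (fun j => mu j * x j) = mu ⬝ᵥ x := rfl
  rw [h1, ← hAw, Matrix.mulVec_transpose, ← Matrix.dotProduct_mulVec]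
  calc Finset.univ.sum (fun i => b i * w i)
      ≤ Finset.univ.sum (fun i => w i * A.mulVec x i) := by
        apply Finset.sum_le_sum
        intro i _
        rw [mul_comm (b i)]
        exact mul_le_mul_of_nonneg_left (hx i) (hw i)
    _ = w ⬝ᵥ A.mulVec x := rfl

lemma append_sum_expand (np nq : ℕ) (u : Fin 1 → ℝ) (v : Fin np → ℝ) (w : Fin nq → ℝ)
    (x : Fin (1+np+nq) → ℝ) :
    Finset.univ.sum (fun j => Fin.append (Fin.append u v) w j * x j) =
      u 0 * x ⟨0, (by omega : 0 + 0 < 1 + np + nq)⟩ + Finset.univ.sum (fun i : Fin np => v i * x ⟨1 + i, (by omega : 1 + (i : ℕ) + 0 < 1 + np + nq)⟩)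
        + Finset.univ.sum (fun j : Fin nq => w j * x ⟨1 + np + j, (by omega : 1 + np + (j : ℕ) + 0 < 1 + np + nq)⟩) := by
  rw [Fin.sum_univ_add, Fin.sum_univ_add]
  simp [Fin.append_left, Fin.append_right]
  rfl

theorem stmt_11 (m np nq : ℕ)
    (A : Matrix (Fin m) (Fin (1 + np + nq)) ℝ) (b : Fin m → ℝ)
    (μp0 μq0 : ℝ) (μp : Fin np → ℝ) (μq : Fin nq → ℝ)
    (muP muQ : Fin (1 + np + nq) → ℝ)
    (hmuP : muP = Fin.append (Fin.append (fun _ : Fin 1 => μp0 - μq0) μp) (fun j => -μq j))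
    (hmuQ : muQ = Fin.append (Fin.append (fun _ : Fin 1 => μq0) (fun _ : Fin np => (0:ℝ))) μq)
    (hx0 : ∀ x : Fin (1 + np + nq) → ℝ, (∀ i, A.mulVec x i ≥ b i) →
      x ⟨0, by omega⟩ = 1)
    (y z : Fin m → ℝ)
    (hy : ∀ i, y i ≥ 0) (hAy : A.transpose.mulVec y = muP)
    (hby : Finset.univ.sum (fun i => b i * y i) ≥ 1)
    (hz : ∀ i, z i ≥ 0) (hAz : A.transpose.mulVec z = muQ)
    (hbz : Finset.univ.sum (fun i => b i * z i) ≥ 0) :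
    ∀ x : Fin (1 + np + nq) → ℝ, (∀ i, A.mulVec x i ≥ b i) →
      (μp0 + Finset.univ.sum (fun i : Fin np => μp i * x ⟨1 + i, by omega⟩)
        ≥ 1 + (μq0 + Finset.univ.sum (fun j : Fin nq => μq j * x ⟨1 + np + j, by omega⟩))) ∧
      (μq0 + Finset.univ.sum (fun j : Fin nq => μq j * x ⟨1 + np + j, by omega⟩) ≥ 0) := by
  intro x hx
  have hx0' := hx0 x hx
  have hP := dual_bound A b x hx y hy muP hAy
  have hQ := dual_bound A b x hx z hz muQ hAz
  rw [hmuP, append_sum_expand, hx0'] at hP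
  rw [hmuQ, append_sum_expand, hx0'] at hQ
  simp only [neg_mul, Finset.sum_neg_distrib, zero_mul, Finset.sum_const_zero] at hP hQ
  constructor <;> linarith
end
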